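/- Let k be a field of characteristic zero, q ∈ k a primitive e-th root of unity acting on k[h]/(N) by the automorphism induced from σ(h) = qh, where N ∈ k[h] is a σ-invariant polynomial of degree d with N(0) ≠ 0. Then the subspace of σ-invariants of k[h]/(N) has dimension d/e over k. -/

import Mathlib

/-!
The classes of `1, h, …, h^(d-1)` form a basis of `k[h]/(N)` made of eigenvectors of `σ`,
with `σ(h^i) = q^i h^i`. Hence the invariants are spanned by the `h^i` with `e ∣ i`, and there are
`d / e` of them because comparing leading coefficients in `σ(N) = N` gives `q^d = 1`, i.e. `e ∣ d`.
-/

open Polynomial Module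

theorem Nat.card_subtype_fin_dvd {d e : ℕ} (h : e ∣ d) :
    Nat.card {i : Fin d // e ∣ (i : ℕ)} = d / e := by
  obtain ⟨m, rfl⟩ := h
  rcases e.eq_zero_or_pos with rfl | he
  · rw [zero_mul]; simp
  rw [Nat.mul_div_cancel_left m he]
  exact Nat.card_eq_of_equiv_fin
    { toFun i := ⟨i.1 / e, Nat.div_lt_of_lt_mul i.1.2⟩
      invFun j := ⟨⟨e * j, by gcongr; exact j.2⟩, dvd_mul_right _ _⟩
      left_inv i := by ext; exact Nat.mul_div_cancel' i.2
      right_inv j := by ext; simp [he] }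

theorem LinearMap.finrank_ker_eq_card_of_apply_basis_eq_smul {K V ι : Type*} [Field K]
    [AddCommGroup V] [Module K V] [Fintype ι] (b : Basis ι K V) (f : V →ₗ[K] V) (c : ι → K)
    (hf : ∀ i, f (b i) = c i • b i) :
    finrank K (ker f) = Nat.card {i // c i = 0} := by
  classical
  have : FiniteDimensional K V := b.finiteDimensional_of_finite
  have hdiag : toMatrix b b f = Matrix.diagonal c := by
    ext i j
    rw [toMatrix_apply, hf, map_smul, b.repr_self, Matrix.diagonal_apply, Finsupp.smul_apply,
      Finsupp.single_apply]
    split_ifs <;> simp_all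
  have hrank : finrank K (range f) = Fintype.card {i // c i ≠ 0} := by
    rw [← Matrix.rank_diagonal, ← hdiag, Matrix.rank_eq_finrank_range_toLin _ b b,
      Matrix.toLin_toMatrix]
  have hsum := f.finrank_range_add_finrank_ker
  rw [finrank_eq_card_basis b, hrank, Fintype.card_subtype_compl] at hsum
  have hle := Fintype.card_subtype_le (fun i => c i = 0)
  rw [Nat.card_eq_fintype_card]
  omega

theorem Polynomial.Monic.pow_natDegree_eq_one_of_comp_C_mul_X_eq {R : Type*} [CommSemiring R]
    {p : R[X]} (hp : p.Monic) {r : R} (h : p.comp (C r * X) = p) : r ^ p.natDegree = 1 := by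
  simpa [hp.coeff_natDegree] using congrArg (coeff · p.natDegree) h

theorem Polynomial.aeval_C_mul_X_X_pow {R : Type*} [CommSemiring R] (r : R) (n : ℕ) :
    aeval (C r * X) (X ^ n : R[X]) = r ^ n • X ^ n := by
  rw [map_pow, aeval_X, mul_pow, ← C_pow, smul_eq_C_mul]

noncomputable def Polynomial.Monic.basisQuotientSpan {R : Type*} [CommRing R] {p : R[X]}
    (hp : p.Monic) : Basis (Fin p.natDegree) R (R[X] ⧸ (Ideal.span {p}).restrictScalars R) :=
  (AdjoinRoot.powerBasisAux' hp).map (Submodule.Quotient.restrictScalarsEquiv R _).symm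

theorem Polynomial.Monic.basisQuotientSpan_apply {R : Type*} [CommRing R] {p : R[X]}
    (hp : p.Monic) (i : Fin p.natDegree) :
    hp.basisQuotientSpan i = Submodule.Quotient.mk (X ^ (i : ℕ)) := by
  have hroot : AdjoinRoot.powerBasisAux' hp i = AdjoinRoot.mk p (X ^ (i : ℕ)) := by
    rw [map_pow, AdjoinRoot.mk_X]
    exact (AdjoinRoot.powerBasis' hp).basis_eq_pow i
  exact (congrArg _ hroot).trans (Submodule.Quotient.restrictScalarsEquiv_symm_mk _ _ _)

theorem Polynomial.Monic.mapQ_aeval_C_mul_X_basisQuotientSpan {R : Type*} [CommRing R]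
    {p : R[X]} (hp : p.Monic) {r : R}
    (h : (Ideal.span {p}).restrictScalars R ≤ Submodule.comap
      (aeval (C r * X) : R[X] →ₐ[R] R[X]).toLinearMap ((Ideal.span {p}).restrictScalars R))
    (i : Fin p.natDegree) :
    Submodule.mapQ _ _ _ h (hp.basisQuotientSpan i) = r ^ (i : ℕ) • hp.basisQuotientSpan i := by
  rw [hp.basisQuotientSpan_apply, Submodule.mapQ_apply, AlgHom.toLinearMap_apply,
    aeval_C_mul_X_X_pow, Submodule.Quotient.mk_smul]

theorem finrank_invariants_quotient (k : Type*) [Field k]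
    (q : k) (e : ℕ) (hq : IsPrimitiveRoot q e)
    (N : k[X]) (hmonic : N.Monic)
    (hN : N.comp (C q * X) = N)
    (hle : (Ideal.span {N}).restrictScalars k ≤
      Submodule.comap (Polynomial.aeval (C q * X) : k[X] →ₐ[k] k[X]).toLinearMap
        ((Ideal.span {N}).restrictScalars k)) :
    Module.finrank k
      ↥(LinearMap.ker
        (Submodule.mapQ ((Ideal.span {N}).restrictScalars k)
            ((Ideal.span {N}).restrictScalars k)
            (Polynomial.aeval (C q * X) : k[X] →ₐ[k] k[X]).toLinearMap hle
          - LinearMap.id))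
      = N.natDegree / e := by
  have hdvd : e ∣ N.natDegree :=
    hq.dvd_of_pow_eq_one _ (hmonic.pow_natDegree_eq_one_of_comp_C_mul_X_eq hN)
  rw [LinearMap.finrank_ker_eq_card_of_apply_basis_eq_smul hmonic.basisQuotientSpan _
      (fun i => q ^ (i : ℕ) - 1) fun i => by
        rw [LinearMap.sub_apply, hmonic.mapQ_aeval_C_mul_X_basisQuotientSpan, LinearMap.id_apply,
          sub_smul, one_smul],
    ← Nat.card_subtype_fin_dvd hdvd]
  simp_rw [sub_eq_zero, hq.pow_eq_one_iff_dvd]
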